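/- arXiv:0805.1016 — 5 statements merged into one kernel-verified Lean document; each statement's English description precedes it below -/
import Mathlib

section
/- Let Y be a Hilbert space and let R be the right shift on H = ℓ²(ℕ, Y), defined by R(x_1, x_2, ...) = (0, x_1, x_2, ...) (unilateral shift). Then there exists a sequence {T_n} of unitary operators on H, with T_n periodic of period n (i.e., T_n^n = I), such that T_n → R in the strong operator topology. -/
/-!
Let `σₙ` be the permutation of `ℕ` that cycles `0, …, n - 1` backwards (`0 ↦ n - 1`,
`k + 1 ↦ k`) and fixes every `k ≥ n`, and let `Tₙ x = x ∘ σₙ`. Permuting coordinates is an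
isometric isomorphism of `ℓ²`, hence unitary, and `σₙⁿ = 1` gives `Tₙⁿ = 1`. On vectors
supported in `{0, …, n - 2}` the operator `Tₙ` acts as the right shift, and the truncations of
`x` to these indices tend to `x`; since `‖Tₙ - R‖` is bounded uniformly in `n`, `Tₙ x → R x`.
-/

open Filter Topology
open scoped ENNReal

section Perm

variable {ι 𝕜 E : Type*} {p : ℝ≥0∞}

theorem Memℓp.comp_perm [NormedAddCommGroup E] {f : ι → E} (hf : Memℓp f p)
    (σ : Equiv.Perm ι) : Memℓp (f ∘ σ) p := by
  rcases p.trichotomy with rfl | rfl | hp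
  · exact memℓp_zero (hf.finite_dsupport.preimage σ.injective.injOn)
  · exact memℓp_infty ((σ.surjective.range_comp fun i => ‖f i‖) ▸ hf.bddAbove)
  · exact memℓp_gen ((σ.summable_iff (f := fun i => ‖f i‖ ^ p.toReal)).2 (hf.summable hp))

variable [NormedField 𝕜] [NormedAddCommGroup E] [NormedSpace 𝕜 E] [Fact (1 ≤ p)]

variable (𝕜 E p) in
noncomputable def lp.compPerm (σ : Equiv.Perm ι) :
    lp (fun _ : ι => E) p ≃ₗᵢ[𝕜] lp (fun _ : ι => E) p where
  toFun f := ⟨f ∘ σ, (lp.memℓp f).comp_perm σ⟩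
  invFun f := ⟨f ∘ σ.symm, (lp.memℓp f).comp_perm σ.symm⟩
  map_add' _ _ := rfl
  map_smul' _ _ := rfl
  left_inv f := lp.ext <| funext fun i => by simp
  right_inv f := lp.ext <| funext fun i => by simp
  norm_map' f := by
    rcases p.dichotomy with rfl | hp
    · simp only [lp.norm_eq_ciSup]
      exact σ.iSup_comp (g := fun i => ‖f i‖)
    · have hp : 0 < p.toReal := zero_lt_one.trans_le hp
      simp only [lp.norm_eq_tsum_rpow hp]
      congr 1
      exact σ.tsum_eq (fun i => ‖f i‖ ^ p.toReal)

theorem lp.compPerm_one : lp.compPerm 𝕜 E p (1 : Equiv.Perm ι) = 1 := rfl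

theorem lp.compPerm_pow (σ : Equiv.Perm ι) (m : ℕ) :
    lp.compPerm 𝕜 E p σ ^ m = lp.compPerm 𝕜 E p (σ ^ m) := by
  induction m with
  | zero => rfl
  | succ m ih => rw [pow_succ', ih, pow_succ]; rfl

end Perm

open Fin.NatCast in
theorem finRotate_pow_self (n : ℕ) : finRotate n ^ n = 1 := by
  rcases n with _ | n
  · rfl
  · have hpow (m : ℕ) (i : Fin (n + 1)) : (finRotate (n + 1) ^ m) i = i + (m : Fin (n + 1)) := by
      induction m with
      | zero => simp
      | succ m ih => rw [pow_succ', Equiv.Perm.mul_apply, ih, finRotate_apply, Nat.cast_succ, add_assoc]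
    refine Equiv.ext fun i => ?_
    rw [hpow, Fin.natCast_self, add_zero]; rfl

def shiftCycle (n : ℕ) : Equiv.Perm ℕ := (finRotate n)⁻¹.extendDomain Fin.equivSubtype

theorem shiftCycle_pow_self (n : ℕ) : shiftCycle n ^ n = 1 := by
  rw [shiftCycle, ← Equiv.Perm.extendDomain_pow, inv_pow, finRotate_pow_self, inv_one,
    Equiv.Perm.extendDomain_one]

theorem shiftCycle_apply_of_lt {n k : ℕ} (hk : k < n) :
    shiftCycle n k = ((finRotate n).symm ⟨k, hk⟩ : ℕ) :=
  Equiv.Perm.extendDomain_apply_subtype (p := (· < n)) _ _ hk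

theorem shiftCycle_apply_zero {n : ℕ} (hn : 0 < n) : shiftCycle n 0 = n - 1 := by
  obtain ⟨n, rfl⟩ := Nat.exists_eq_add_of_lt hn
  rw [shiftCycle_apply_of_lt hn]
  simp [finRotate_symm_apply]

theorem shiftCycle_apply_succ {n k : ℕ} (hk : k + 1 < n) : shiftCycle n (k + 1) = k := by
  obtain ⟨n, rfl⟩ := Nat.exists_eq_add_of_lt hk
  rw [shiftCycle_apply_of_lt hk, finRotate_symm_apply, Fin.coe_sub_one]
  simp

theorem shiftCycle_apply_of_le {n k : ℕ} (hk : n ≤ k) : shiftCycle n k = k :=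
  Equiv.Perm.extendDomain_apply_not_subtype _ _ hk.not_gt

theorem lp.sum_single_apply {α : Type*} {E : α → Type*} [∀ i, NormedAddCommGroup (E i)]
    {p : ℝ≥0∞} [DecidableEq α] (f : ∀ i, E i) (s : Finset α) (j : α) :
    (∑ i ∈ s, lp.single p i (f i)) j = if j ∈ s then f j else 0 := by
  simp only [lp.coeFn_sum, Finset.sum_apply, lp.coeFn_single, Finset.sum_pi_single]

theorem comp_shiftCycle_eq_of_eq_shift {E : Type*} [Zero E] {n : ℕ} (hn : 0 < n) {y z : ℕ → E}
    (hz₀ : z 0 = 0) (hz : ∀ k, z (k + 1) = y k) (hy : ∀ k, n ≤ k + 1 → y k = 0) :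
    y ∘ shiftCycle n = z := by
  funext k
  rcases k with _ | k
  · rw [Function.comp_apply, shiftCycle_apply_zero hn, hz₀, hy _ (by omega)]
  · rw [Function.comp_apply, hz]
    rcases lt_or_ge (k + 1) n with hk | hk
    · rw [shiftCycle_apply_succ hk]
    · rw [shiftCycle_apply_of_le hk, hy _ hk, hy _ (by omega)]

theorem tendsto_apply_of_eventually_eq_of_tendsto {α 𝕜 E F : Type*} [NontriviallyNormedField 𝕜]
    [SeminormedAddCommGroup E] [NormedSpace 𝕜 E] [SeminormedAddCommGroup F] [NormedSpace 𝕜 F]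
    {l : Filter α} {T : α → E →L[𝕜] F} {S : E →L[𝕜] F} {C : ℝ} (hT : ∀ a, ‖T a‖ ≤ C)
    {x : E} {q : α → E} (hq : Tendsto q l (𝓝 x)) (hTS : ∀ᶠ a in l, T a (q a) = S (q a)) :
    Tendsto (fun a => T a x) l (𝓝 (S x)) := by
  rw [tendsto_iff_norm_sub_tendsto_zero] at hq ⊢
  have hbound : ∀ᶠ a in l, ‖T a x - S x‖ ≤ (C + ‖S‖) * ‖q a - x‖ := hTS.mono fun a ha => calc
    ‖T a x - S x‖ = ‖S (q a - x) - T a (q a - x)‖ := by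
        rw [map_sub, map_sub, ha, sub_sub_sub_cancel_left]
    _ ≤ ‖S (q a - x)‖ + ‖T a (q a - x)‖ := norm_sub_le _ _
    _ ≤ ‖S‖ * ‖q a - x‖ + C * ‖q a - x‖ :=
        add_le_add (S.le_opNorm _) ((T a).le_of_opNorm_le (hT a) _)
    _ = (C + ‖S‖) * ‖q a - x‖ := by ring
  exact squeeze_zero' (.of_forall fun _ => norm_nonneg _) hbound (by simpa using hq.const_mul _)

/-- The right shift on `ℓ²(ℕ, Y)` is the strong limit of a sequence of unitary operators
`Tₙ` with `Tₙⁿ = 1` (periodic of period `n`). -/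
theorem stmt1 {Y : Type*} [NormedAddCommGroup Y] [InnerProductSpace ℂ Y] [CompleteSpace Y]
    (R : lp (fun _ : ℕ => Y) 2 →L[ℂ] lp (fun _ : ℕ => Y) 2)
    (hR0 : ∀ x, R x 0 = 0) (hR : ∀ x k, R x (k + 1) = x k) :
    ∃ T : ℕ → (lp (fun _ : ℕ => Y) 2 →L[ℂ] lp (fun _ : ℕ => Y) 2),
      (∀ n, 1 ≤ n → T n ∈ unitary (lp (fun _ : ℕ => Y) 2 →L[ℂ] lp (fun _ : ℕ => Y) 2) ∧
        (T n) ^ n = 1) ∧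
      ∀ x, Tendsto (fun n => T n x) atTop (𝓝 (R x)) := by
  let U (n : ℕ) := Unitary.linearIsometryEquiv.symm (lp.compPerm ℂ Y 2 (shiftCycle n))
  refine ⟨fun n => U n, fun n _ => ⟨(U n).property, ?_⟩, fun x => ?_⟩
  · rw [← SubmonoidClass.coe_pow, ← map_pow, lp.compPerm_pow, shiftCycle_pow_self,
      lp.compPerm_one, map_one, OneMemClass.coe_one]
  · let q (n : ℕ) := ∑ i ∈ Finset.range (n - 1), lp.single 2 i (x i)
    have hq : Tendsto q atTop (𝓝 x) :=
      (lp.hasSum_single ENNReal.ofNat_ne_top x).tendsto_sum_nat.comp (tendsto_sub_atTop_nat 1)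
    refine tendsto_apply_of_eventually_eq_of_tendsto (C := 1) (fun n => ?_) hq ?_
    · exact (lp.compPerm ℂ Y 2 (shiftCycle n)).toLinearIsometry.norm_toContinuousLinearMap_le
    filter_upwards [eventually_gt_atTop 0] with n hn
    refine lp.ext (comp_shiftCycle_eq_of_eq_shift hn (hR0 _) (hR _) fun k hk => ?_)
    exact (lp.sum_single_apply _ _ k).trans (if_neg (by simpa using hk))
end

section
/- For the right shift R on ℓ²(ℕ, Y) and the cyclic shift T_n (cyclically permuting the first n coordinates), for every x = (x_1, x_2, ...) ∈ ℓ²(ℕ, Y) one has ‖T_n x − R x‖² = ‖x_n‖² + Σ_{k≥n} ‖x_{k+1} − x_k‖², and this quantity tends to 0 as n → ∞. -/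
open Filter Topology ENNReal

/-!
The difference `Tₙ x - R x` vanishes in the coordinates `1, …, n-1`, equals `x (n-1)` in
coordinate `0` and the backward difference `x i - x (i-1)` in every coordinate `i ≥ n`; splitting
the ℓ²-norm accordingly gives the identity. Both terms tend to `0`: the first is a term of the
convergent series `∑ ‖x i‖²`, the second a tail of the series `∑ ‖x (k+1) - x k‖²`.
-/

namespace lp

section

variable {ι : Type*} {E : ι → Type*} [∀ i, NormedAddCommGroup (E i)]

theorem summable_norm_sq (f : lp E 2) : Summable fun i => ‖f i‖ ^ 2 := by
  simpa using (lp.memℓp f).summable (by norm_num : 0 < (2 : ℝ≥0∞).toReal)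

theorem norm_sq_eq_tsum (f : lp E 2) : ‖f‖ ^ 2 = ∑' i, ‖f i‖ ^ 2 := by
  simpa using lp.norm_rpow_eq_tsum (by norm_num : 0 < (2 : ℝ≥0∞).toReal) f

end

theorem norm_sq_eq_norm_sq_zero_add_tsum_of_eq_zero {E : ℕ → Type*}
    [∀ i, NormedAddCommGroup (E i)] (f : lp E 2) {n : ℕ} (hn : 1 ≤ n)
    (hf : ∀ i, 1 ≤ i → i < n → f i = 0) :
    ‖f‖ ^ 2 = ‖f 0‖ ^ 2 + ∑' k, ‖f (n + k)‖ ^ 2 := by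
  rw [norm_sq_eq_tsum, ← (summable_norm_sq f).sum_add_tsum_nat_add n,
    Finset.sum_eq_single_of_mem 0 (Finset.mem_range.mpr hn)]
  · exact congrArg _ (tsum_congr fun k => by rw [add_comm])
  · intro i hi hi0
    rw [hf i (Nat.one_le_iff_ne_zero.mpr hi0) (Finset.mem_range.mp hi)]
    simp

variable {E : Type*} [NormedAddCommGroup E]

theorem tendsto_norm_sq_add_tsum_norm_sub_sq (x : lp (fun _ : ℕ => E) 2) :
    Tendsto (fun m => ‖x m‖ ^ 2 + ∑' k, ‖x (m + 1 + k) - x (m + k)‖ ^ 2) atTop (𝓝 0) := by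
  have htail := _root_.tendsto_sum_nat_add fun k => ‖x (k + 1) - x k‖ ^ 2
  simpa using (summable_norm_sq x).tendsto_atTop_zero.add <| htail.congr fun m =>
    tsum_congr fun k => by rw [show k + m + 1 = m + 1 + k by omega, add_comm k m]

end lp

theorem stmt3_general {Y : Type*} [NormedAddCommGroup Y] [InnerProductSpace ℂ Y]
    (R : lp (fun _ : ℕ => Y) 2 →L[ℂ] lp (fun _ : ℕ => Y) 2)
    (hR0 : ∀ x, R x 0 = 0) (hR : ∀ x k, R x (k + 1) = x k)
    (T : ℕ → (lp (fun _ : ℕ => Y) 2 →L[ℂ] lp (fun _ : ℕ => Y) 2))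
    (hT0 : ∀ n x, 1 ≤ n → T n x 0 = x (n - 1))
    (hT1 : ∀ n x i, 1 ≤ i → i < n → T n x i = x (i - 1))
    (hT2 : ∀ n x i, 1 ≤ n → n ≤ i → T n x i = x i)
    (x : lp (fun _ : ℕ => Y) 2) :
    (∀ n, 1 ≤ n → ‖T n x - R x‖ ^ 2 =
      ‖x (n - 1)‖ ^ 2 + ∑' k : ℕ, ‖x (n + k) - x (n - 1 + k)‖ ^ 2) ∧
    Tendsto (fun n => ‖T n x - R x‖) atTop (𝓝 0) := by
  have hRx : ∀ i, 1 ≤ i → R x i = x (i - 1) := fun i hi => by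
    simpa [Nat.sub_add_cancel hi] using hR x (i - 1)
  have key : ∀ n, 1 ≤ n → ‖T n x - R x‖ ^ 2 =
      ‖x (n - 1)‖ ^ 2 + ∑' k : ℕ, ‖x (n + k) - x (n - 1 + k)‖ ^ 2 := by
    intro n hn
    have hD : ∀ i, (T n x - R x) i = T n x i - R x i := fun _ => rfl
    rw [lp.norm_sq_eq_norm_sq_zero_add_tsum_of_eq_zero _ hn fun i hi hin => by
      rw [hD, hT1 n x i hi hin, hRx i hi, sub_self]]
    congr 1
    · rw [hD, hT0 n x hn, hR0, sub_zero]
    · refine tsum_congr fun k => ?_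
      rw [hD, hT2 n x (n + k) hn (by omega), hRx _ (by omega),
        show n + k - 1 = n - 1 + k by omega]
  refine ⟨key, ?_⟩
  have hsq : Tendsto (fun n => ‖T n x - R x‖ ^ 2) atTop (𝓝 0) := by
    refine ((lp.tendsto_norm_sq_add_tsum_norm_sub_sq x).comp (tendsto_sub_atTop_nat 1)).congr' ?_
    filter_upwards [eventually_ge_atTop 1] with n hn
    simp only [Function.comp_apply, Nat.sub_add_cancel hn, key n hn]
  simpa using hsq.sqrt

/-- For the right shift `R` and the cyclic shifts `Tₙ` on `ℓ²(ℕ, Y)` (coordinates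
indexed from `0`), one has `‖Tₙ x - R x‖² = ‖x (n-1)‖² + ∑_{k} ‖x (n+k) - x (n-1+k)‖²`,
and this tends to `0` as `n → ∞`. -/
theorem stmt3 {Y : Type*} [NormedAddCommGroup Y] [InnerProductSpace ℂ Y] [CompleteSpace Y]
    (R : lp (fun _ : ℕ => Y) 2 →L[ℂ] lp (fun _ : ℕ => Y) 2)
    (hR0 : ∀ x, R x 0 = 0) (hR : ∀ x k, R x (k + 1) = x k)
    (T : ℕ → (lp (fun _ : ℕ => Y) 2 →L[ℂ] lp (fun _ : ℕ => Y) 2))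
    (hT0 : ∀ n x, 1 ≤ n → T n x 0 = x (n - 1))
    (hT1 : ∀ n x i, 1 ≤ i → i < n → T n x i = x (i - 1))
    (hT2 : ∀ n x i, 1 ≤ n → n ≤ i → T n x i = x i)
    (x : lp (fun _ : ℕ => Y) 2) :
    (∀ n, 1 ≤ n → ‖T n x - R x‖ ^ 2 =
      ‖x (n - 1)‖ ^ 2 + ∑' k : ℕ, ‖x (n + k) - x (n - 1 + k)‖ ^ 2) ∧
    Tendsto (fun n => ‖T n x - R x‖) atTop (𝓝 0) :=
  stmt3_general R hR0 hR T hT0 hT1 hT2 x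
end

section
/- Let H be a separable infinite-dimensional Hilbert space. Then there exists a sequence {T_n} of unitary operators on H such that no T_n has any eigenvalue of modulus 1 (equivalently, each T_n is almost weakly stable) and ‖T_n − I‖ → 0 in operator norm. -/
/-!
Via a Hilbert basis indexed by `ℤ` and the Fourier basis, `H` is isometric to `L²(ℝ/ℤ)`.
There, multiplication by `u θ = exp(iθ/(n+1))`, with `θ` read in `[0, 1)`, is unitary and within
`1/(n+1)` of the identity in operator norm. Since `u` is injective and points are null, `u`
takes each value `c` only on a null set, so `u g = c g` forces `g = 0` almost everywhere:
there are no eigenvalues.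
-/

open Filter Topology MeasureTheory

noncomputable section

namespace MeasureTheory.Lp

variable {α : Type*} [MeasurableSpace α] {μ : Measure α}

lemma memLp_circle_mul {u : α → Circle} (hu : AEStronglyMeasurable u μ) (g : Lp ℂ 2 μ) :
    MemLp (fun x => (u x : ℂ) * g x) 2 μ :=
  (Lp.memLp g).of_le
    ((continuous_subtype_val.comp_aestronglyMeasurable hu).mul (Lp.aestronglyMeasurable g))
    (.of_forall fun x => by rw [norm_mul, Circle.norm_coe, one_mul])

def circleMul (u : α → Circle) (hu : AEStronglyMeasurable u μ) :
    Lp ℂ 2 μ →ₗᵢ[ℂ] Lp ℂ 2 μ where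
  toFun g := (memLp_circle_mul hu g).toLp
  map_add' g₁ g₂ := by
    rw [← MemLp.toLp_add]
    refine MemLp.toLp_congr _ _ ?_
    filter_upwards [Lp.coeFn_add g₁ g₂] with x hx
    rw [Pi.add_apply, hx, Pi.add_apply, mul_add]
  map_smul' c g := by
    rw [RingHom.id_apply, ← MemLp.toLp_const_smul]
    refine MemLp.toLp_congr _ _ ?_
    filter_upwards [Lp.coeFn_smul c g] with x hx
    simp [hx, mul_left_comm]
  norm_map' g := by
    change ‖(memLp_circle_mul hu g).toLp‖ = ‖g‖
    rw [Lp.norm_toLp, Lp.norm_def]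
    congr 1
    exact eLpNorm_congr_norm_ae (.of_forall fun x => by rw [norm_mul, Circle.norm_coe, one_mul])

lemma coeFn_circleMul {u : α → Circle} (hu : AEStronglyMeasurable u μ) (g : Lp ℂ 2 μ) :
    circleMul u hu g =ᵐ[μ] fun x => (u x : ℂ) * g x :=
  (memLp_circle_mul hu g).coeFn_toLp

lemma circleMul_circleMul_of_mul_eq_one {u v : α → Circle} (hu : AEStronglyMeasurable u μ)
    (hv : AEStronglyMeasurable v μ) (hvu : v * u = 1) (g : Lp ℂ 2 μ) :
    circleMul v hv (circleMul u hu g) = g := by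
  refine Lp.ext ?_
  filter_upwards [coeFn_circleMul hv (circleMul u hu g), coeFn_circleMul hu g] with x h₁ h₂
  rw [h₁, h₂, ← mul_assoc, ← Circle.coe_mul, ← Pi.mul_apply v u, hvu]
  simp

def circleMulEquiv (u : α → Circle) (hu : AEStronglyMeasurable u μ) :
    Lp ℂ 2 μ ≃ₗᵢ[ℂ] Lp ℂ 2 μ :=
  { circleMul u hu with
    invFun := circleMul u⁻¹ hu.inv
    left_inv := circleMul_circleMul_of_mul_eq_one hu hu.inv (inv_mul_cancel u)
    right_inv := circleMul_circleMul_of_mul_eq_one hu.inv hu (mul_inv_cancel u) }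

lemma circleMulEquiv_ne_smul [NullSingletonClass μ] {u : α → Circle}
    (hu : AEStronglyMeasurable u μ) (hinj : Function.Injective u) (c : ℂ) {g : Lp ℂ 2 μ}
    (hg : g ≠ 0) :
    circleMulEquiv u hu g ≠ c • g := by
  intro (h : circleMul u hu g = c • g)
  have hlevel : ∀ᵐ x ∂μ, (u x : ℂ) ≠ c := by
    refine measure_eq_zero_iff_ae_notMem.mp (Set.Subsingleton.measure_zero ?_ μ)
    exact fun x hx y hy => hinj (Circle.coe_injective (hx.trans hy.symm))
  refine hg (Lp.ext ?_)
  filter_upwards [coeFn_circleMul hu g, h ▸ Lp.coeFn_smul c g, hlevel, Lp.coeFn_zero ℂ 2 μ]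
    with x h₁ h₂ hx h₀
  have hfactor : ((u x : ℂ) - c) * g x = 0 := by
    rw [sub_mul, ← h₁]
    simpa [sub_eq_zero] using h₂
  rw [h₀, Pi.zero_apply]
  simpa [sub_ne_zero.mpr hx] using hfactor

lemma norm_circleMul_sub_le {u : α → Circle} (hu : AEStronglyMeasurable u μ) {ε : ℝ}
    (hε : 0 ≤ ε) (hdist : ∀ x, ‖(u x : ℂ) - 1‖ ≤ ε) (g : Lp ℂ 2 μ) :
    ‖circleMul u hu g - g‖ ≤ ε * ‖g‖ := by
  rw [← Real.norm_of_nonneg hε, ← norm_smul]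
  refine Lp.norm_le_norm_of_ae_le ?_
  filter_upwards [Lp.coeFn_sub (circleMul u hu g) g, coeFn_circleMul hu g,
    Lp.coeFn_smul ε g] with x h₁ h₂ h₃
  rw [h₁, Pi.sub_apply, h₂, h₃, Pi.smul_apply, norm_smul, ← sub_one_mul, norm_mul]
  gcongr
  exact (hdist x).trans (Real.le_norm_self ε)

lemma norm_circleMulEquiv_sub_one_le {u : α → Circle} (hu : AEStronglyMeasurable u μ) {ε : ℝ}
    (hε : 0 ≤ ε) (hdist : ∀ x, ‖(u x : ℂ) - 1‖ ≤ ε) :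
    ‖(circleMulEquiv u hu : Lp ℂ 2 μ →L[ℂ] Lp ℂ 2 μ) - 1‖ ≤ ε :=
  ContinuousLinearMap.opNorm_le_bound _ hε (norm_circleMul_sub_le hu hε hdist)

end MeasureTheory.Lp

namespace HilbertBasis

variable {ι ι' 𝕜 E : Type*} [RCLike 𝕜] [NormedAddCommGroup E] [InnerProductSpace 𝕜 E]

lemma countable_index [TopologicalSpace.SeparableSpace E] (b : HilbertBasis ι 𝕜 E) :
    Countable ι := by
  refine Pairwise.countable_of_isOpen_disjoint (s := fun i => Metric.ball (b i) 2⁻¹)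
    (fun i j hij => Metric.ball_disjoint_ball ?_) (fun _ => Metric.isOpen_ball)
    (fun i => ⟨b i, Metric.mem_ball_self (by norm_num)⟩)
  have hsq : ‖b i - b j‖ ^ 2 = 2 := by
    rw [@norm_sub_sq 𝕜, b.orthonormal.1 i, b.orthonormal.1 j, b.orthonormal.2 hij]
    norm_num
  rw [dist_eq_norm]
  nlinarith [norm_nonneg (b i - b j)]

lemma infinite_index (b : HilbertBasis ι 𝕜 E) (h : ¬ FiniteDimensional 𝕜 E) : Infinite ι := by
  by_contra hfin
  rw [not_infinite_iff_finite] at hfin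
  have := Fintype.ofFinite ι
  exact h b.toOrthonormalBasis.toBasis.finiteDimensional_of_finite

variable [CompleteSpace E]

def reindex (b : HilbertBasis ι 𝕜 E) (e : ι' ≃ ι) : HilbertBasis ι' 𝕜 E :=
  HilbertBasis.mk (b.orthonormal.comp e e.injective) <| by
    rw [Set.range_comp, e.range_eq_univ, Set.image_univ, b.dense_span]

end HilbertBasis

lemma nonempty_hilbertBasis_int (𝕜 E : Type*) [RCLike 𝕜] [NormedAddCommGroup E]
    [InnerProductSpace 𝕜 E] [CompleteSpace E] [TopologicalSpace.SeparableSpace E]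
    (h : ¬ FiniteDimensional 𝕜 E) : Nonempty (HilbertBasis ℤ 𝕜 E) := by
  obtain ⟨w, b, -⟩ := exists_hilbertBasis 𝕜 E
  have := b.countable_index
  have := b.infinite_index h
  obtain ⟨e⟩ := nonempty_equiv_of_countable (α := ℤ) (β := w)
  exact ⟨b.reindex e⟩

namespace AddCircle

instance {T : ℝ} [Fact (0 < T)] : NullSingletonClass (haarAddCircle (T := T)) := by
  refine ⟨fun x => ?_⟩
  have h := volume_closedBall (T := T) (x := x) 0
  rw [Metric.closedBall_zero, volume_eq_smul_haarAddCircle] at h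
  simpa [not_le.mpr (Fact.out : 0 < T)] using h

def expMulIco (t : ℝ) (θ : AddCircle (1 : ℝ)) : Circle :=
  Circle.exp (t * equivIco 1 0 θ)

lemma aestronglyMeasurable_expMulIco (t : ℝ) (μ : Measure (AddCircle (1 : ℝ))) :
    AEStronglyMeasurable (expMulIco t) μ :=
  Circle.exp.continuous.comp_aestronglyMeasurable
    ((measurable_subtype_coe.comp (measurableEquivIco 1 0).measurable).const_mul t
      |>.aestronglyMeasurable)

lemma injective_expMulIco {t : ℝ} (ht₀ : 0 < t) (ht : t ≤ 2 * Real.pi) :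
    Function.Injective (expMulIco t) := by
  intro θ θ' h
  have hmem (θ : AddCircle (1 : ℝ)) : t * (equivIco 1 0 θ : ℝ) ∈ Set.Ico 0 (2 * Real.pi) := by
    obtain ⟨h₀, h₁⟩ := (equivIco 1 0 θ).2
    constructor <;> nlinarith
  have := Circle.exp_injOn_Ico (by linarith) (hmem θ) (hmem θ') h
  exact (equivIco 1 0).injective (Subtype.ext (mul_left_cancel₀ ht₀.ne' this))

lemma norm_expMulIco_sub_one_le {t : ℝ} (ht : 0 ≤ t) (θ : AddCircle (1 : ℝ)) :
    ‖(expMulIco t θ : ℂ) - 1‖ ≤ t := by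
  obtain ⟨h₀, h₁⟩ := (equivIco 1 0 θ).2
  rw [expMulIco, Circle.coe_exp, mul_comm]
  refine Real.norm_exp_I_mul_ofReal_sub_one_le.trans ?_
  rw [Real.norm_of_nonneg (by positivity)]
  nlinarith

end AddCircle

end

open AddCircle in
/-- On a separable infinite-dimensional Hilbert space there is a sequence of unitary
operators without eigenvalues of modulus 1 (i.e. almost weakly stable) converging to the
identity in operator norm. -/
theorem stmt4 {H : Type*} [NormedAddCommGroup H] [InnerProductSpace ℂ H] [CompleteSpace H]
    [TopologicalSpace.SeparableSpace H] (hinf : ¬ FiniteDimensional ℂ H) :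
    ∃ T : ℕ → H →L[ℂ] H,
      (∀ n, T n ∈ unitary (H →L[ℂ] H)) ∧
      (∀ n (c : ℂ), ‖c‖ = 1 → ∀ x : H, x ≠ 0 → T n x ≠ c • x) ∧
      Tendsto (fun n => ‖T n - 1‖) atTop (𝓝 0) := by
  obtain ⟨b⟩ := nonempty_hilbertBasis_int ℂ H hinf
  let e : Lp ℂ 2 (haarAddCircle (T := 1)) ≃ₗᵢ[ℂ] H := fourierBasis.repr.trans b.repr.symm
  let t : ℕ → ℝ := fun n => 1 / (n + 1)
  have ht₀ : ∀ n, 0 < t n := fun n => Nat.one_div_pos_of_nat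
  have ht : ∀ n, t n ≤ 2 * Real.pi := fun n =>
    (Nat.one_div_le_one_div (Nat.zero_le n)).trans (by linarith [Real.pi_gt_three])
  let U n := Lp.circleMulEquiv (expMulIco (t n)) (aestronglyMeasurable_expMulIco _ haarAddCircle)
  refine ⟨fun n => e.conjStarAlgEquiv (U n), fun n => ?_, fun n c _ x hx h => ?_, ?_⟩
  · exact Unitary.map_mem _ (Unitary.linearIsometryEquiv.symm (U n)).2
  · have hU : U n (e.symm x) = c • e.symm x := e.injective (by simpa using h)
    exact Lp.circleMulEquiv_ne_smul _ (injective_expMulIco (ht₀ n) (ht n)) c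
      (e.symm.map_ne_zero_iff.mpr hx) hU
  · refine squeeze_zero (fun n => norm_nonneg _) (fun n => ?_)
      tendsto_one_div_add_atTop_nhds_zero_nat
    rw [← map_one e.conjStarAlgEquiv, ← map_sub, StarAlgEquiv.norm_map]
    exact Lp.norm_circleMulEquiv_sub_one_le _ (ht₀ n).le (norm_expMulIco_sub_one_le (ht₀ n).le)
end

section
/- Let H be a separable infinite-dimensional Hilbert space and let I denote the set of all isometries on H with the strong operator topology. Then the set of periodic isometries (isometries V with V^n = Id for some n ≥ 1; such V are automatically unitary) is dense in I. -/
/-!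
Only finitely many vectors are tested, so `V` matters only on the finite-dimensional span `F` of
them, and `V|F` extends to a unitary `u` of the finite-dimensional space `K = F + V F`. The
spectrum of `u` is a finite subset of the unit circle; rounding it to `n`-th roots of unity through
the continuous functional calculus gives a unitary `w` of `K` with `w ^ n = 1` and
`‖u - w‖ ≤ π / n`. Extending `w` by the identity on `Kᗮ` gives the periodic isometry of `H`.
-/

open Real
open scoped InnerProductSpace

namespace Complex

noncomputable def roundToRootOfUnity (n : ℕ) (z : ℂ) : ℂ :=
  exp (↑(2 * π * round (n * arg z / (2 * π)) / n) * I)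

theorem roundToRootOfUnity_pow {n : ℕ} (hn : n ≠ 0) (z : ℂ) :
    roundToRootOfUnity n z ^ n = 1 := by
  rw [roundToRootOfUnity, ← exp_nat_mul, ← exp_int_mul_two_pi_mul_I (round (n * arg z / (2 * π)))]
  congr 1
  push_cast
  field_simp

theorem norm_roundToRootOfUnity (n : ℕ) (z : ℂ) : ‖roundToRootOfUnity n z‖ = 1 :=
  norm_exp_ofReal_mul_I _

theorem norm_sub_roundToRootOfUnity_le {n : ℕ} (hn : n ≠ 0) {z : ℂ} (hz : ‖z‖ = 1) :
    ‖z - roundToRootOfUnity n z‖ ≤ π / n := by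
  set θ := 2 * π * round (n * arg z / (2 * π)) / n
  have hθ : |arg z - θ| ≤ π / n := by
    have hpos : (0 : ℝ) < n := by positivity
    have key : arg z - θ = (n * arg z / (2 * π) - round (n * arg z / (2 * π))) * (2 * π / n) := by
      simp only [θ]; field_simp
    rw [key, abs_mul, abs_of_pos (by positivity : 0 < 2 * π / n)]
    calc _ ≤ 1 / 2 * (2 * π / n) := by gcongr; exact abs_sub_round _
      _ = π / n := by ring
  have hw : roundToRootOfUnity n z = exp (θ * I) := rfl
  have hsplit : z - roundToRootOfUnity n z =
      roundToRootOfUnity n z * (exp (I * ↑(arg z - θ)) - 1) := by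
    rw [hw, mul_sub_one, ← exp_add]
    conv_lhs => rw [← norm_mul_exp_arg_mul_I z, hz]
    push_cast; ring_nf
  calc ‖z - roundToRootOfUnity n z‖ = ‖exp (I * ↑(arg z - θ)) - 1‖ := by
        rw [hsplit, norm_mul, norm_roundToRootOfUnity, one_mul]
    _ ≤ ‖arg z - θ‖ := norm_exp_I_mul_ofReal_sub_one_le
    _ ≤ π / n := hθ

end Complex

theorem ContinuousLinearMap.finite_spectrum {𝕜 E : Type*} [NontriviallyNormedField 𝕜]
    [CompleteSpace 𝕜] [NormedAddCommGroup E] [NormedSpace 𝕜 E] [FiniteDimensional 𝕜 E]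
    (T : E →L[𝕜] E) : (spectrum 𝕜 T).Finite := by
  let e : Module.End 𝕜 E ≃ₐ[𝕜] (E →L[𝕜] E) :=
    AlgEquiv.ofLinearEquiv LinearMap.toContinuousLinearMap rfl fun _ _ ↦ rfl
  rw [← AlgEquiv.spectrum_eq e.symm]
  exact Module.End.finite_spectrum _

theorem Unitary.exists_pow_eq_one_norm_sub_le {A : Type*} [CStarAlgebra A] {u : A}
    (hu : u ∈ unitary A) (hfin : (spectrum ℂ u).Finite) {δ : ℝ} (hδ : 0 < δ) :
    ∃ w ∈ unitary A, ∃ n : ℕ, 1 ≤ n ∧ w ^ n = 1 ∧ ‖u - w‖ ≤ δ := by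
  obtain ⟨n, hn⟩ := exists_nat_gt (π / δ)
  have hn0 : n ≠ 0 := by rintro rfl; exact (div_pos pi_pos hδ).not_gt (by simpa using hn)
  -- the rounding map is discontinuous, but on a finite spectrum `cfc` still accepts it
  have hcont := hfin.continuousOn (Complex.roundToRootOfUnity n)
  refine ⟨cfc (Complex.roundToRootOfUnity n) u, ?_, n, Nat.one_le_iff_ne_zero.mpr hn0, ?_, ?_⟩
  · rw [cfc_unitary_iff _ u]
    intro z _
    rw [RCLike.star_def, Complex.conj_mul', Complex.norm_roundToRootOfUnity]
    simp
  · rw [← cfc_pow .., ← cfc_one ℂ u]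
    exact cfc_congr fun z _ ↦ Complex.roundToRootOfUnity_pow hn0 z
  · nth_rw 1 [← cfc_id' ℂ u]
    rw [← cfc_sub ..]
    refine norm_cfc_le hδ.le fun z hz ↦ ?_
    calc ‖z - Complex.roundToRootOfUnity n z‖ ≤ π / n :=
          Complex.norm_sub_roundToRootOfUnity_le hn0 (spectrum.norm_eq_one_of_unitary hu hz)
      _ ≤ δ := by
          rw [div_lt_iff₀ hδ] at hn
          rw [div_le_iff₀ (by positivity)]
          linarith

theorem ContinuousLinearMap.exists_pow_eq_one_norm_sub_le_of_mem_unitary {E : Type*}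
    [NormedAddCommGroup E] [InnerProductSpace ℂ E] [FiniteDimensional ℂ E] {u : E →L[ℂ] E}
    (hu : u ∈ unitary (E →L[ℂ] E)) {δ : ℝ} (hδ : 0 < δ) :
    ∃ w ∈ unitary (E →L[ℂ] E), ∃ n : ℕ, 1 ≤ n ∧ w ^ n = 1 ∧ ‖u - w‖ ≤ δ :=
  have : CompleteSpace E := FiniteDimensional.complete ℂ E
  Unitary.exists_pow_eq_one_norm_sub_le hu u.finite_spectrum hδ

namespace Submodule

variable {𝕜 E : Type*} [RCLike 𝕜] [NormedAddCommGroup E] [InnerProductSpace 𝕜 E]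
  (K : Submodule 𝕜 E) [K.HasOrthogonalProjection]

noncomputable def extendById : (K →L[𝕜] K) →* (E →L[𝕜] E) where
  toFun w := K.subtypeL ∘L w ∘L K.orthogonalProjectionOnto + Kᗮ.starProjection
  map_one' := by
    ext y
    exact starProjection_add_starProjection_orthogonal y
  map_mul' a b := by
    ext y
    have h₁ : K.orthogonalProjectionOnto (b (K.orthogonalProjectionOnto y) + Kᗮ.starProjection y)
        = b (K.orthogonalProjectionOnto y) := by
      rw [map_add, orthogonalProjectionOnto_mem_subspace_eq_self,
        orthogonalProjectionOnto_apply_of_mem_orthogonal (starProjection_apply_mem _ y), add_zero]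
    have h₂ : Kᗮ.starProjection (b (K.orthogonalProjectionOnto y) + Kᗮ.starProjection y)
        = Kᗮ.starProjection y := by
      rw [map_add, starProjection_orthogonal_apply_eq_zero (b _).2, zero_add,
        starProjection_eq_self_iff.mpr (starProjection_apply_mem _ y)]
    change (a (b (K.orthogonalProjectionOnto y)) : E) + Kᗮ.starProjection y =
      (a (K.orthogonalProjectionOnto (b (K.orthogonalProjectionOnto y) + Kᗮ.starProjection y)) : E)
        + Kᗮ.starProjection (b (K.orthogonalProjectionOnto y) + Kᗮ.starProjection y)
    rw [h₁, h₂]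

theorem extendById_apply (w : K →L[𝕜] K) (y : E) :
    K.extendById w y = w (K.orthogonalProjectionOnto y) + Kᗮ.starProjection y := rfl

theorem extendById_apply_coe (w : K →L[𝕜] K) (x : K) : K.extendById w x = w x := by
  rw [extendById_apply, orthogonalProjectionOnto_mem_subspace_eq_self,
    starProjection_orthogonal_apply_eq_zero x.2, add_zero]

theorem norm_extendById_apply {w : K →L[𝕜] K} (hw : ∀ x, ‖w x‖ = ‖x‖) (y : E) :
    ‖K.extendById w y‖ = ‖y‖ := by
  have horth : ⟪(w (K.orthogonalProjectionOnto y) : E), Kᗮ.starProjection y⟫_𝕜 = 0 :=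
    K.inner_right_of_mem_orthogonal (w _).2 (starProjection_apply_mem _ y)
  rw [← sq_eq_sq₀ (norm_nonneg _) (norm_nonneg _), extendById_apply, sq,
    norm_add_sq_eq_norm_sq_add_norm_sq_of_inner_eq_zero _ _ horth,
    norm_sq_eq_add_norm_sq_starProjection y K,
    show ‖(w (K.orthogonalProjectionOnto y) : E)‖ = ‖K.starProjection y‖ from hw _, sq, sq]

end Submodule

theorem LinearIsometry.exists_mem_unitary_coe_apply_eq {𝕜 E : Type*} [RCLike 𝕜]
    [NormedAddCommGroup E] [InnerProductSpace 𝕜 E] (V : E →ₗᵢ[𝕜] E) {F K : Submodule 𝕜 E}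
    [FiniteDimensional 𝕜 K]
    (hVF : F.map V.toLinearMap ≤ K) :
    ∃ u ∈ unitary (K →L[𝕜] K), ∀ x : K, (x : E) ∈ F → (u x : E) = V x := by
  let S : Submodule 𝕜 K := F.comap K.subtype
  let L : S →ₗᵢ[𝕜] K :=
    { toLinearMap := (V.toLinearMap ∘ₗ K.subtype ∘ₗ S.subtype).codRestrict K
        fun s ↦ hVF (Submodule.mem_map_of_mem s.2)
      norm_map' := fun s ↦ V.norm_map _ }
  let u := Unitary.linearIsometryEquiv.symm (L.extend.toLinearIsometryEquiv rfl)
  exact ⟨u, u.2, fun x hx ↦ congrArg Subtype.val (L.extend_apply ⟨x, hx⟩)⟩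

theorem stmt13_general {H : Type*} [NormedAddCommGroup H] [InnerProductSpace ℂ H] :
    ∀ V : H →L[ℂ] H, (∀ x, ‖V x‖ = ‖x‖) → ∀ ε > (0 : ℝ), ∀ (m : ℕ) (x : Fin m → H),
      ∃ W : H →L[ℂ] H, (∀ y, ‖W y‖ = ‖y‖) ∧ (∃ n : ℕ, 1 ≤ n ∧ W ^ n = 1) ∧
        ∀ i, ‖V (x i) - W (x i)‖ < ε := by
  intro V hV ε hε m x
  let V' : H →ₗᵢ[ℂ] H := ⟨V.toLinearMap, hV⟩
  let F := Submodule.span ℂ (Set.range x)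
  have : FiniteDimensional ℂ F := .span_of_finite ℂ (Set.finite_range x)
  let K := F ⊔ F.map V'.toLinearMap
  obtain ⟨u, hu, hux⟩ := V'.exists_mem_unitary_coe_apply_eq (F := F) (K := K) le_sup_right
  let C := ∑ i, ‖x i‖
  obtain ⟨w, hw, n, hn, hwn, huw⟩ :=
    u.exists_pow_eq_one_norm_sub_le_of_mem_unitary hu (δ := ε / (C + 1)) (by positivity)
  refine ⟨K.extendById w, K.norm_extendById_apply (w.norm_map_of_mem_unitary hw),
    ⟨n, hn, by rw [← map_pow, hwn, map_one]⟩, fun i ↦ ?_⟩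
  have hxF : x i ∈ F := Submodule.subset_span ⟨i, rfl⟩
  let xK : K := ⟨x i, le_sup_left (a := F) hxF⟩
  calc ‖V (x i) - K.extendById w (x i)‖ = ‖(u xK : H) - (w xK : H)‖ := by
        rw [hux xK hxF, K.extendById_apply_coe w xK]
        rfl
    _ = ‖(u - w) xK‖ := rfl
    _ ≤ ‖u - w‖ * ‖x i‖ := (u - w).le_opNorm xK
    _ ≤ ε / (C + 1) * C := by
        gcongr
        exact Finset.single_le_sum (f := fun j ↦ ‖x j‖) (fun j _ ↦ norm_nonneg _)
          (Finset.mem_univ i)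
    _ < ε := by
        rw [div_mul_eq_mul_div, div_lt_iff₀ (by positivity)]
        linarith

/-- On a separable infinite-dimensional Hilbert space, the periodic isometries
(which are automatically unitary) are dense in the set of all isometries with respect to
the strong operator topology. -/
theorem stmt13 {H : Type*} [NormedAddCommGroup H] [InnerProductSpace ℂ H] [CompleteSpace H]
    [TopologicalSpace.SeparableSpace H] (hinf : ¬ FiniteDimensional ℂ H) :
    ∀ V : H →L[ℂ] H, (∀ x, ‖V x‖ = ‖x‖) → ∀ ε > (0 : ℝ), ∀ (m : ℕ) (x : Fin m → H),
      ∃ W : H →L[ℂ] H, (∀ y, ‖W y‖ = ‖y‖) ∧ (∃ n : ℕ, 1 ≤ n ∧ W ^ n = 1) ∧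
        ∀ i, ‖V (x i) - W (x i)‖ < ε :=
  stmt13_general
end

section
/- Let H be a separable infinite-dimensional Hilbert space and let I denote the set of all isometries on H with the strong operator topology. Then the set of almost weakly stable isometries (isometries without eigenvalues of modulus 1) is dense in I. -/
/-!
Let `K` be the finite-dimensional span of the vectors `x i` and `V (x i)`, and `A` an isometry of
`K` agreeing with `V` on the `x i`. As `Kᗮ` is infinite-dimensional, it carries a unilateral shift
`T` and an isometry `J` of `K` into the orthogonal complement of the range of `T`. The operator
acting as `cos θ • A + sin θ • J` on `K` and as `T` on `Kᗮ` is an isometry, close to `V` on the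
`x i` for small `θ`. An eigenvector for a unimodular eigenvalue `c` is orthogonal to `K`, because
its component `p` in `K` satisfies `c • p = cos θ • A p` with `|cos θ| < 1`; it is then an
eigenvector of the shift `T`, which has none.
-/

open Filter Topology
open scoped InnerProductSpace

section

variable {𝕜 E F : Type*} [RCLike 𝕜] [NormedAddCommGroup E] [InnerProductSpace 𝕜 E]
  [NormedAddCommGroup F] [InnerProductSpace 𝕜 F]

namespace HilbertBasis

variable {ι : Type*}

theorem inner_map_eq_zero (b : HilbertBasis ι 𝕜 E) (f : E →L[𝕜] F) {w : F}
    (hw : ∀ i, ⟪w, f (b i)⟫_𝕜 = 0) (x : E) : ⟪w, f x⟫_𝕜 = 0 := by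
  have h : (innerSL 𝕜 w).comp f = 0 :=
    ContinuousLinearMap.ext_on (s := Set.range b)
      (Submodule.dense_iff_topologicalClosure_eq_top.2 b.dense_span)
      (by rintro _ ⟨i, rfl⟩; simpa using hw i)
  simpa using congr($h x)

theorem eq_zero_of_forall_inner_eq_zero (b : HilbertBasis ι 𝕜 E) {x : E}
    (hx : ∀ i, ⟪b i, x⟫_𝕜 = 0) : x = 0 := by
  refine inner_self_eq_zero.1 (b.inner_map_eq_zero (.id 𝕜 E) (fun i => ?_) x)
  simpa [inner_eq_zero_symm] using hx i

noncomputable def linearIsometryOfOrthonormal [CompleteSpace F] (b : HilbertBasis ι 𝕜 E)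
    {v : ι → F} (hv : Orthonormal 𝕜 v) : E →ₗᵢ[𝕜] F :=
  hv.orthogonalFamily.linearIsometry.comp b.repr.toLinearIsometry

@[simp]
theorem linearIsometryOfOrthonormal_apply [CompleteSpace F] (b : HilbertBasis ι 𝕜 E)
    {v : ι → F} (hv : Orthonormal 𝕜 v) (i : ι) : b.linearIsometryOfOrthonormal hv (b i) = v i := by
  classical
  simp [linearIsometryOfOrthonormal, b.repr_self, OrthogonalFamily.linearIsometry_apply_single]

theorem eq_zero_of_shift_apply_eq_smul (b : HilbertBasis (ι × ℕ) 𝕜 E) (T : E →ₗᵢ[𝕜] E)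
    (hT : ∀ a n, T (b (a, n)) = b (a, n + 1)) {c : 𝕜} {x : E} (hx : T x = c • x) : x = 0 := by
  rcases eq_or_ne c 0 with rfl | hc
  · exact T.injective (by rw [hx, zero_smul, map_zero])
  have hcoeff : ∀ a n, c * ⟪b (a, n), x⟫_𝕜 = ⟪b (a, n), T x⟫_𝕜 := fun a n => by
    rw [hx, inner_smul_right]
  refine b.eq_zero_of_forall_inner_eq_zero fun ⟨a, n⟩ => ?_
  induction n with
  | zero =>
    refine (mul_eq_zero.1 ?_).resolve_left hc
    rw [hcoeff]
    refine b.inner_map_eq_zero T.toContinuousLinearMap (fun ⟨a', n'⟩ => ?_) x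
    simp [hT, b.orthonormal.inner_eq_zero]
  | succ n ih =>
    refine (mul_eq_zero.1 ?_).resolve_left hc
    rw [hcoeff, ← hT, T.inner_map_map, ih]

end HilbertBasis

theorem exists_linearIsometry_orthogonal_to_shift [FiniteDimensional 𝕜 E] [CompleteSpace F]
    (hF : ¬ FiniteDimensional 𝕜 F) :
    ∃ (J : E →ₗᵢ[𝕜] F) (T : F →ₗᵢ[𝕜] F),
      (∀ x y, ⟪J x, T y⟫_𝕜 = 0) ∧ ∀ (c : 𝕜) y, T y = c • y → y = 0 := by
  obtain ⟨w, b, -⟩ := exists_hilbertBasis 𝕜 F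
  have : Infinite w := by
    refine not_finite_iff_infinite.1 fun hw => hF ?_
    have := Fintype.ofFinite w
    exact .of_basis b.toOrthonormalBasis.toBasis
  -- Since `w` is infinite, `#(w × ℕ) = #w`: reindex so that `T` shifts along the `ℕ` coordinate
  -- and `J` maps into the slice `n = 0`, which is orthogonal to the range of `T`.
  obtain ⟨e⟩ : Nonempty (w × ℕ ≃ w) := Cardinal.eq.1 (by simp)
  let B : HilbertBasis (w × ℕ) 𝕜 F :=
    HilbertBasis.mk (b.orthonormal.comp e e.injective) (by simp [EquivLike.range_comp])
  have := FiniteDimensional.complete 𝕜 E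
  let u := (stdOrthonormalBasis 𝕜 E).toHilbertBasis
  let J := u.linearIsometryOfOrthonormal (v := fun i => B (Infinite.natEmbedding w i, 0))
    (B.orthonormal.comp _ fun i j h =>
      Fin.val_injective ((Infinite.natEmbedding w).injective congr($h.1)))
  let T := B.linearIsometryOfOrthonormal (v := fun p => B (p.1, p.2 + 1))
    (B.orthonormal.comp _ fun p q h => by simpa [Prod.ext_iff] using h)
  refine ⟨J, T, fun x y => ?_, fun c y => B.eq_zero_of_shift_apply_eq_smul T fun a n => ?_⟩
  · refine B.inner_map_eq_zero T.toContinuousLinearMap (fun p => ?_) y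
    rw [inner_eq_zero_symm]
    refine u.inner_map_eq_zero J.toContinuousLinearMap (fun i => ?_) x
    simp [J, T, B.orthonormal.inner_eq_zero]
  · simp [T]

namespace Submodule

theorem exists_linearIsometry_eq_on {F K : Submodule 𝕜 E} [FiniteDimensional 𝕜 K]
    (V : E →ₗᵢ[𝕜] E) (hFK : F ≤ K) (hVF : F.map V.toLinearMap ≤ K) :
    ∃ A : K →ₗᵢ[𝕜] K, ∀ x (hx : x ∈ F), (A ⟨x, hFK hx⟩ : E) = V x := by
  let S : Submodule 𝕜 K := F.comap K.subtype
  let L : S →ₗᵢ[𝕜] K :=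
    { toLinearMap := (V.toLinearMap ∘ₗ K.subtype ∘ₗ S.subtype).codRestrict K
        fun s => hVF ⟨_, s.2, rfl⟩
      norm_map' := fun s => V.norm_map _ }
  exact ⟨L.extend, fun x hx => congr($(L.extend_apply ⟨⟨x, hFK hx⟩, hx⟩).1)⟩

theorem not_finiteDimensional_orthogonal [CompleteSpace E] (K : Submodule 𝕜 E)
    [FiniteDimensional 𝕜 K] (hE : ¬ FiniteDimensional 𝕜 E) : ¬ FiniteDimensional 𝕜 Kᗮ := by
  intro hK
  have h : FiniteDimensional 𝕜 ↥(K ⊔ Kᗮ) := inferInstance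
  rw [sup_orthogonal_of_hasOrthogonalProjection] at h
  exact hE (Module.Finite.equiv topEquiv)

variable (K : Submodule 𝕜 E) [K.HasOrthogonalProjection]

/-- With respect to `E = K ⊕ Kᗮ`, the block operator `[[cos θ • A, 0], [sin θ • J, T]]`. -/
noncomputable def tilt (A : K →ₗᵢ[𝕜] K) (J : K →ₗᵢ[𝕜] Kᗮ) (T : Kᗮ →ₗᵢ[𝕜] Kᗮ) (θ : ℝ) :
    E →L[𝕜] E :=
  K.subtypeL ∘L ((Real.cos θ : 𝕜) • A.toContinuousLinearMap) ∘L K.orthogonalProjectionOnto +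
    Kᗮ.subtypeL ∘L ((Real.sin θ : 𝕜) • J.toContinuousLinearMap ∘L K.orthogonalProjectionOnto +
      T.toContinuousLinearMap ∘L Kᗮ.orthogonalProjectionOnto)

variable {K} (A : K →ₗᵢ[𝕜] K) (J : K →ₗᵢ[𝕜] Kᗮ) (T : Kᗮ →ₗᵢ[𝕜] Kᗮ) (θ : ℝ)

theorem tilt_apply (x : E) :
    K.tilt A J T θ x = (((Real.cos θ : 𝕜) • A (K.orthogonalProjectionOnto x) : K) : E) +
      (((Real.sin θ : 𝕜) • J (K.orthogonalProjectionOnto x) + T (Kᗮ.orthogonalProjectionOnto x) :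
        Kᗮ) : E) :=
  rfl

theorem tilt_apply_of_mem {x : E} (hx : x ∈ K) :
    K.tilt A J T θ x =
      (((Real.cos θ : 𝕜) • A ⟨x, hx⟩ : K) : E) + (((Real.sin θ : 𝕜) • J ⟨x, hx⟩ : Kᗮ) : E) := by
  rw [tilt_apply, orthogonalProjectionOnto_orthogonal_apply_eq_zero hx, map_zero, add_zero,
    orthogonalProjectionOnto_mem_subspace_eq_self ⟨x, hx⟩]

theorem orthogonalProjectionOnto_tilt (x : E) :
    K.orthogonalProjectionOnto (K.tilt A J T θ x) =
      (Real.cos θ : 𝕜) • A (K.orthogonalProjectionOnto x) := by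
  rw [tilt_apply, map_add, orthogonalProjectionOnto_mem_subspace_eq_self,
    orthogonalProjectionOnto_apply_of_mem_orthogonal (SetLike.coe_mem _), add_zero]

theorem norm_tilt (hJT : ∀ x y, ⟪J x, T y⟫_𝕜 = 0) (x : E) : ‖K.tilt A J T θ x‖ = ‖x‖ := by
  set p := K.orthogonalProjectionOnto x
  set q := Kᗮ.orthogonalProjectionOnto x
  have pythagoras : ∀ {G : Type _} [NormedAddCommGroup G] [InnerProductSpace 𝕜 G] (u v : G),
      ⟪u, v⟫_𝕜 = 0 → ‖u + v‖ ^ 2 = ‖u‖ ^ 2 + ‖v‖ ^ 2 := fun u v h => by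
    simpa [sq] using norm_add_sq_eq_norm_sq_add_norm_sq_of_inner_eq_zero u v h
  have h₁ : ‖K.tilt A J T θ x‖ ^ 2 =
      ‖(Real.cos θ : 𝕜) • A p‖ ^ 2 + ‖(Real.sin θ : 𝕜) • J p + T q‖ ^ 2 := by
    rw [tilt_apply, pythagoras _ _
      (K.inner_right_of_mem_orthogonal (SetLike.coe_mem _) (SetLike.coe_mem _))]
    rfl
  have h₂ : ‖(Real.sin θ : 𝕜) • J p + T q‖ ^ 2 = ‖(Real.sin θ : 𝕜) • J p‖ ^ 2 + ‖T q‖ ^ 2 :=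
    pythagoras _ _ (by rw [inner_smul_left, hJT, mul_zero])
  refine (sq_eq_sq₀ (norm_nonneg _) (norm_nonneg _)).1 ?_
  rw [h₁, h₂, norm_sq_eq_add_norm_sq_projection x K]
  simp only [norm_smul, RCLike.norm_ofReal, LinearIsometry.norm_map, mul_pow, sq_abs]
  linear_combination ‖p‖ ^ 2 * Real.cos_sq_add_sin_sq θ

theorem eq_zero_of_tilt_apply_eq_smul (hθ : Real.sin θ ≠ 0)
    (hT : ∀ (c : 𝕜) y, T y = c • y → y = 0) {c : 𝕜} (hc : ‖c‖ = 1) {x : E}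
    (hx : K.tilt A J T θ x = c • x) : x = 0 := by
  have hp : K.orthogonalProjectionOnto x = 0 := by
    set p := K.orthogonalProjectionOnto x
    have hcos : |Real.cos θ| < 1 := by
      rw [← sq_lt_one_iff_abs_lt_one, Real.cos_sq']
      linarith [lt_of_le_of_ne (sq_nonneg _) (pow_ne_zero 2 hθ).symm]
    have h : c • p = (Real.cos θ : 𝕜) • A p := by
      rw [← orthogonalProjectionOnto_tilt, hx, map_smul]
    have h' : ‖p‖ = |Real.cos θ| * ‖p‖ := by
      simpa [norm_smul, hc] using congr(‖$h‖)
    exact norm_eq_zero.1 (by nlinarith [norm_nonneg p])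
  have hxK : x ∈ Kᗮ := orthogonalProjectionOnto_eq_zero_iff.1 hp
  have hTx : T ⟨x, hxK⟩ = c • ⟨x, hxK⟩ := by
    apply Subtype.ext
    rw [coe_smul, ← hx, tilt_apply, hp, orthogonalProjectionOnto_mem_subspace_eq_self ⟨x, hxK⟩]
    simp
  simpa using hT c _ hTx

theorem norm_sub_tilt_le {x : E} (hx : x ∈ K) :
    ‖(A ⟨x, hx⟩ : E) - K.tilt A J T θ x‖ ≤ (|1 - Real.cos θ| + |Real.sin θ|) * ‖x‖ := by
  rw [tilt_apply_of_mem A J T θ hx]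
  calc _ = ‖((1 - Real.cos θ : ℝ) : 𝕜) • (A ⟨x, hx⟩ : E) - (Real.sin θ : 𝕜) • (J ⟨x, hx⟩ : E)‖ := by
        congr 1; push_cast; simp only [sub_smul, one_smul]; abel
    _ ≤ _ := norm_sub_le _ _
    _ = _ := by
        rw [norm_smul, norm_smul, RCLike.norm_ofReal, RCLike.norm_ofReal, add_mul]
        congr 2
        exacts [A.norm_map _, J.norm_map _]

end Submodule

end

theorem exists_sin_ne_zero_forall_lt {ι : Type*} [Finite ι] (a : ι → ℝ) {ε : ℝ} (hε : 0 < ε) :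
    ∃ θ : ℝ, Real.sin θ ≠ 0 ∧ ∀ i, (|1 - Real.cos θ| + |Real.sin θ|) * a i < ε := by
  have hlim : ∀ i, Tendsto (fun θ => (|1 - Real.cos θ| + |Real.sin θ|) * a i) (𝓝[>] 0) (𝓝 0) :=
    fun i => tendsto_nhdsWithin_of_tendsto_nhds (by simpa using ((by fun_prop :
      Continuous fun θ => (|1 - Real.cos θ| + |Real.sin θ|) * a i).tendsto 0))
  have hsin : ∀ᶠ θ in 𝓝[>] 0, Real.sin θ ≠ 0 :=
    mem_of_superset (Ioo_mem_nhdsGT Real.pi_pos)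
      fun θ hθ => (Real.sin_pos_of_pos_of_lt_pi hθ.1 hθ.2).ne'
  exact (hsin.and (eventually_all.2 fun i => (hlim i).eventually_lt_const hε)).exists

theorem stmt14_general {H : Type*} [NormedAddCommGroup H] [InnerProductSpace ℂ H] [CompleteSpace H]
    (hinf : ¬ FiniteDimensional ℂ H) :
    ∀ V : H →L[ℂ] H, (∀ x, ‖V x‖ = ‖x‖) → ∀ ε > (0 : ℝ), ∀ (m : ℕ) (x : Fin m → H),
      ∃ W : H →L[ℂ] H, (∀ y, ‖W y‖ = ‖y‖) ∧
        (∀ c : ℂ, ‖c‖ = 1 → ∀ y : H, y ≠ 0 → W y ≠ c • y) ∧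
        ∀ i, ‖V (x i) - W (x i)‖ < ε := by
  intro V hV ε hε m x
  let V' : H →ₗᵢ[ℂ] H := ⟨V.toLinearMap, hV⟩
  let F := Submodule.span ℂ (Set.range x)
  have : FiniteDimensional ℂ F := FiniteDimensional.span_of_finite ℂ (Set.finite_range x)
  let K := F ⊔ F.map V'.toLinearMap
  obtain ⟨A, hA⟩ :=
    Submodule.exists_linearIsometry_eq_on (F := F) (K := K) V' le_sup_left le_sup_right
  obtain ⟨J, T, hJT, hT⟩ :=
    exists_linearIsometry_orthogonal_to_shift (E := K) (K.not_finiteDimensional_orthogonal hinf)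
  obtain ⟨θ, hθ, hθε⟩ := exists_sin_ne_zero_forall_lt (fun i => ‖x i‖) hε
  refine ⟨K.tilt A J T θ, K.norm_tilt A J T θ hJT,
    fun c hc y hy hWy => hy (K.eq_zero_of_tilt_apply_eq_smul A J T θ hθ hT hc hWy), fun i => ?_⟩
  have hxF : x i ∈ F := Submodule.subset_span ⟨i, rfl⟩
  have h := (K.norm_sub_tilt_le A J T θ (le_sup_left (b := F.map V'.toLinearMap) hxF)).trans_lt
    (hθε i)
  rwa [hA _ hxF] at h

/-- On a separable infinite-dimensional Hilbert space, the almost weakly stable isometries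
(isometries without eigenvalues of modulus one) are dense in the set of all isometries
with respect to the strong operator topology. -/
theorem stmt14 {H : Type*} [NormedAddCommGroup H] [InnerProductSpace ℂ H] [CompleteSpace H]
    [TopologicalSpace.SeparableSpace H] (hinf : ¬ FiniteDimensional ℂ H) :
    ∀ V : H →L[ℂ] H, (∀ x, ‖V x‖ = ‖x‖) → ∀ ε > (0 : ℝ), ∀ (m : ℕ) (x : Fin m → H),
      ∃ W : H →L[ℂ] H, (∀ y, ‖W y‖ = ‖y‖) ∧
        (∀ c : ℂ, ‖c‖ = 1 → ∀ y : H, y ≠ 0 → W y ≠ c • y) ∧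
        ∀ i, ‖V (x i) - W (x i)‖ < ε :=
  stmt14_general hinf
end
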